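/- arXiv:2408.01461 — 8 statements merged into one kernel-verified Lean document; each statement's English description precedes it below -/
import Mathlib

section
/- A subset C of a topological space X is a countable intersection of clopen sets if and only if there exists a continuous function f from X to the one-point compactification ℕ(∞) of the discrete space ℕ such that C = f⁻¹({∞}). -/
open Set Topology OnePoint

theorem cdelta_iff_preimage_infty {X : Type*} [TopologicalSpace X] (C : Set X) :
    (∃ F : Set (Set X), F.Countable ∧ F.Nonempty ∧ (∀ A ∈ F, IsClopen A) ∧ C = ⋂₀ F) ↔
      ∃ f : X → OnePoint ℕ, Continuous f ∧ C = f ⁻¹' {∞} := by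
  classical
  constructor
  · rintro ⟨F, hFc, hFne, hFclopen, rfl⟩
    obtain ⟨A, rfl⟩ := hFc.exists_eq_range hFne
    -- decreasing clopen sequence
    set g : ℕ → Set X := fun n => ⋂ m ∈ Finset.range (n + 1), A m with hg
    have hgclopen : ∀ n, IsClopen (g n) :=
      fun n => isClopen_biInter_finset fun m _ => hFclopen _ (mem_range_self m)
    have hmemg : ∀ x, (∀ n, x ∈ g n) ↔ x ∈ ⋂₀ range A := by
      intro x
      constructor
      · rintro h S ⟨n, rfl⟩
        have := h n
        simp only [hg, Set.mem_iInter] at this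
        exact this n (Finset.self_mem_range_succ n)
      · intro h n
        simp only [hg, Set.mem_iInter]
        exact fun m _ => h _ ⟨m, rfl⟩
    set f : X → OnePoint ℕ := fun x =>
      if h : ∃ n, x ∉ g n then ((Nat.find h : ℕ) : OnePoint ℕ) else ∞ with hf
    have hfinfty : ∀ x, f x = ∞ ↔ x ∈ ⋂₀ range A := by
      intro x
      rw [← hmemg]
      simp only [hf]
      split_ifs with h
      · simp only [OnePoint.coe_ne_infty, false_iff]
        push_neg
        exact ⟨Nat.find h, Nat.find_spec h⟩
      · push_neg at h
        simpa using h
    set fib : ℕ → Set X := fun n => (⋂ m ∈ Finset.range n, g m) ∩ (g n)ᶜ with hfib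
    have hfibclopen : ∀ n, IsClopen (fib n) :=
      fun n => (isClopen_biInter_finset fun m _ => hgclopen m).inter (hgclopen n).compl
    have hfibn : ∀ (x : X) (n : ℕ), f x = (n : OnePoint ℕ) ↔ x ∈ fib n := by
      intro x n
      simp only [hf, hfib, Set.mem_inter_iff, Set.mem_iInter, Finset.mem_range,
        Set.mem_compl_iff]
      split_ifs with h
      · rw [OnePoint.coe_eq_coe, Nat.find_eq_iff h]
        constructor
        · rintro ⟨h1, h2⟩
          exact ⟨fun m hm => not_not.mp (h2 m hm), h1⟩
        · rintro ⟨h1, h2⟩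
          exact ⟨h2, fun m hm => not_not.mpr (h1 m hm)⟩
      · push_neg at h
        exact ⟨fun h' => absurd h' (OnePoint.infty_ne_coe n),
          fun h' => absurd (h n) h'.2⟩
    refine ⟨f, ?_, ?_⟩
    · rw [continuous_def]
      intro U hU
      by_cases hinf : ∞ ∈ U
      · rw [OnePoint.isOpen_iff_of_mem hinf] at hU
        have hfin : (((↑) : ℕ → OnePoint ℕ) ⁻¹' U)ᶜ.Finite := by
          simpa using hU.2.finite_of_discrete
        have hcompl : (f ⁻¹' U)ᶜ = ⋃ n ∈ (((↑) : ℕ → OnePoint ℕ) ⁻¹' U)ᶜ, fib n := by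
          ext x
          simp only [Set.mem_compl_iff, Set.mem_preimage, Set.mem_iUnion]
          constructor
          · intro hx
            have hne : f x ≠ ∞ := fun h => hx (h ▸ hinf)
            obtain ⟨n, hn⟩ := OnePoint.ne_infty_iff_exists.mp hne
            exact ⟨n, fun hnU => hx (hn ▸ hnU), (hfibn x n).mp hn.symm⟩
          · rintro ⟨n, hn, hx⟩ hxU
            rw [← hfibn x n] at hx
            exact hn (hx ▸ hxU)
        rw [← isClosed_compl_iff, hcompl]
        exact hfin.isClosed_biUnion fun n _ => (hfibclopen n).isClosed
      · have : f ⁻¹' U = ⋃ n ∈ (((↑) : ℕ → OnePoint ℕ) ⁻¹' U), fib n := by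
          ext x
          simp only [Set.mem_preimage, Set.mem_iUnion]
          constructor
          · intro hx
            have hne : f x ≠ ∞ := fun h => hinf (h ▸ hx)
            obtain ⟨n, hn⟩ := OnePoint.ne_infty_iff_exists.mp hne
            exact ⟨n, hn.symm ▸ hx, (hfibn x n).mp hn.symm⟩
          · rintro ⟨n, hn, hx⟩
            rw [← hfibn x n] at hx
            exact hx ▸ hn
        rw [this]
        exact isOpen_biUnion fun n _ => (hfibclopen n).isOpen
    · ext x
      simp only [Set.mem_preimage, Set.mem_singleton_iff]
      exact (hfinfty x).symm
  · rintro ⟨f, hf, rfl⟩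
    set B : ℕ → Set (OnePoint ℕ) := fun n => {∞} ∪ ((↑) '' Set.Ioi n) with hB
    have hBclopen : ∀ n, IsClopen (B n) := by
      intro n
      constructor
      · rw [← isOpen_compl_iff, OnePoint.isOpen_iff_of_notMem (by simp [hB])]
        exact isOpen_discrete _
      · rw [OnePoint.isOpen_iff_of_mem (by simp [hB])]
        refine ⟨isClosed_discrete _, ?_⟩
        have : (((↑) : ℕ → OnePoint ℕ) ⁻¹' B n)ᶜ ⊆ Set.Iic n := by
          intro m hm
          simp only [hB, Set.mem_compl_iff, Set.mem_preimage, Set.mem_union,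
            Set.mem_singleton_iff, Set.mem_image] at hm
          push_neg at hm
          by_contra hmn
          exact hm.2 m (Set.mem_Ioi.mpr (lt_of_not_ge hmn)) rfl
        exact ((Set.finite_Iic n).subset this).isCompact
    refine ⟨Set.range fun n => f ⁻¹' B n, Set.countable_range _, Set.range_nonempty _,
      ?_, ?_⟩
    · rintro S ⟨n, rfl⟩
      exact (hBclopen n).preimage hf
    · ext x
      simp only [Set.mem_preimage, Set.mem_singleton_iff, Set.sInter_range, Set.mem_iInter]
      constructor
      · intro hx n
        simp [hB, hx]
      · intro hx
        by_contra h
        obtain ⟨m, hm⟩ := OnePoint.ne_infty_iff_exists.mp h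
        have := hx m
        rw [← hm] at this
        simp only [hB, Set.mem_preimage, Set.mem_union, Set.mem_singleton_iff,
          Set.mem_image, OnePoint.coe_eq_coe] at this
        rcases this with h' | ⟨k, hk, hk'⟩
        · exact OnePoint.coe_ne_infty m h'
        · exact absurd (hk' ▸ hk) (lt_irrefl m)
end

section
/- Every zero-dimensional Lindelöf T₁-space is homeomorphic to a closed subspace of a power ℕ^J of the discrete space ℕ for some nonempty set J (i.e., it is ℕ-compact). -/
open Set Topology TopologicalSpace

/-- A space is `ℕ`-compact if it is homeomorphic to a closed subspace of a power of the
discrete space `ℕ`. -/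
def NCompact (X : Type u) [TopologicalSpace X] : Prop :=
  ∃ (J : Type u) (_ : Nonempty J) (s : Set (J → ℕ)), IsClosed s ∧ Nonempty (X ≃ₜ s)

theorem nCompact_of_zeroDim_lindelof {X : Type u} [TopologicalSpace X] [T1Space X]
    [LindelofSpace X] (hzd : IsTopologicalBasis {A : Set X | IsClopen A}) :
    NCompact X := by
  classical
  rcases isEmpty_or_nonempty X with hX | hX
  · refine ⟨PUnit.{u+1}, ⟨PUnit.unit⟩, ∅, isClosed_empty, ⟨?_⟩⟩
    haveI : IsEmpty (∅ : Set (PUnit.{u+1} → ℕ)) := Set.isEmpty_coe_sort.2 rfl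
    exact ⟨Equiv.equivOfIsEmpty X _, by continuity, by continuity⟩
  -- indicator functions of clopen sets
  have indf : ∀ A : Set X, IsClopen A → Continuous (fun y => if y ∈ A then (1:ℕ) else 0) := by
    intro A hA
    rw [continuous_discrete_rng]
    intro n
    rcases eq_or_ne n 1 with rfl | h1
    · convert hA.isOpen using 1
      ext y; by_cases hy : y ∈ A <;> simp [hy]
    rcases eq_or_ne n 0 with rfl | h0
    · convert hA.compl.isOpen using 1
      ext y; by_cases hy : y ∈ A <;> simp [hy]
    · convert isOpen_empty using 1
      ext y; by_cases hy : y ∈ A <;> simp [hy, h1.symm, h0.symm]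
  let e : X → (C(X, ℕ) → ℕ) := fun x f => f x
  have he_cont : Continuous e := continuous_pi fun f => f.continuous
  have he_ind : Topology.IsInducing e := by
    rw [Topology.isInducing_iff_nhds]
    intro x
    refine le_antisymm (he_cont.continuousAt (x := x)).le_comap ?_
    intro U hU
    rcases mem_nhds_iff.1 hU with ⟨O, hOU, hO, hxO⟩
    rcases hzd.exists_subset_of_mem_open hxO hO with ⟨A, hA, hxA, hAO⟩
    refine Filter.mem_comap.2 ⟨(fun h => h ⟨_, indf A hA⟩) ⁻¹' {1}, ?_, ?_⟩
    · refine IsOpen.mem_nhds ((isOpen_discrete _).preimage (continuous_apply _)) ?_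
      simp [e, hxA]
    · intro y hy
      simp only [mem_preimage, mem_singleton_iff, e, ContinuousMap.coe_mk] at hy
      have : y ∈ A := by by_contra hy'; simp [hy'] at hy
      exact hOU (hAO this)
  have he_inj : Function.Injective e := by
    intro x y hxy
    by_contra hne
    have hyc : IsOpen ({y} : Set X)ᶜ := isClosed_singleton.isOpen_compl
    rcases hzd.exists_subset_of_mem_open (show x ∈ ({y}ᶜ : Set X) by simpa using hne) hyc
      with ⟨A, hA, hxA, hAc⟩
    have hyA : y ∉ A := fun h => hAc h rfl
    have := congrFun hxy ⟨_, indf A hA⟩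
    simp [e, hxA, hyA] at this
  have hclosed : IsClosed (Set.range e) := by
    rw [← isOpen_compl_iff, isOpen_iff_mem_nhds]
    intro g hg
    rw [mem_compl_iff, mem_range] at hg
    push_neg at hg
    -- for each x pick a separating function
    have hsep : ∀ x : X, ∃ f : C(X, ℕ), f x ≠ g f := by
      intro x
      by_contra h
      push_neg at h
      exact hg x (funext fun f => h f)
    choose f hf using hsep
    set V : X → Set X := fun x => {y | f x y ≠ g (f x)} with hV
    have hVclopen : ∀ x, IsClopen (V x) := by
      intro x
      have : V x = (f x) ⁻¹' ({g (f x)}ᶜ) := rfl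
      rw [this]
      exact (isClopen_discrete _).preimage (f x).continuous
    have hVcover : (univ : Set X) ⊆ ⋃ x, V x := fun y _ => mem_iUnion.2 ⟨y, hf y⟩
    obtain ⟨t, htc, htcov⟩ := isLindelof_univ.elim_countable_subcover V
      (fun x => (hVclopen x).isOpen) hVcover
    have htne : t.Nonempty := by
      obtain ⟨x0⟩ := hX
      rcases mem_iUnion₂.1 (htcov (mem_univ x0)) with ⟨x, hx, _⟩
      exact ⟨x, hx⟩
    obtain ⟨u, hu⟩ := htc.exists_eq_range htne
    have hcov : ∀ y : X, ∃ n, y ∈ V (u n) := by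
      intro y
      rcases mem_iUnion₂.1 (htcov (mem_univ y)) with ⟨x, hx, hyx⟩
      rw [hu, mem_range] at hx
      rcases hx with ⟨n, rfl⟩
      exact ⟨n, hyx⟩
    let F : X → ℕ := fun y => Nat.find (hcov y)
    have hFcont : Continuous F := by
      rw [continuous_discrete_rng]
      intro n
      have : F ⁻¹' {n} = V (u n) ∩ ⋂ m ∈ Finset.range n, (V (u m))ᶜ := by
        ext y
        simp only [mem_preimage, mem_singleton_iff, mem_inter_iff, mem_iInter,
          Finset.mem_range, mem_compl_iff, F]
        constructor
        · rintro rfl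
          exact ⟨Nat.find_spec (hcov y), fun m hm => Nat.find_min (hcov y) hm⟩
        · rintro ⟨h1, h2⟩
          exact (Nat.find_eq_iff (hcov y)).2 ⟨h1, fun m hm => h2 m hm⟩
      rw [this]
      exact (hVclopen _).isOpen.inter
        (isOpen_biInter_finset fun m _ => (hVclopen _).compl.isOpen)
    set Fc : C(X, ℕ) := ⟨F, hFcont⟩ with hFc
    set n0 := g Fc with hn0
    refine mem_nhds_iff.2 ⟨{h | h Fc = g Fc ∧ h (f (u n0)) = g (f (u n0))}, ?_, ?_, ?_⟩
    · rintro h ⟨h1, h2⟩ ⟨y, rfl⟩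
      have hFy : F y = n0 := h1
      have hyV : y ∈ V (u n0) := hFy ▸ Nat.find_spec (hcov y)
      exact hyV h2
    · have : {h : C(X,ℕ) → ℕ | h Fc = g Fc ∧ h (f (u n0)) = g (f (u n0))} =
        (fun h => h Fc) ⁻¹' {g Fc} ∩ (fun h => h (f (u n0))) ⁻¹' {g (f (u n0))} := rfl
      rw [this]
      exact ((isOpen_discrete _).preimage (continuous_apply _)).inter
        ((isOpen_discrete _).preimage (continuous_apply _))
    · exact ⟨rfl, rfl⟩
  exact ⟨C(X, ℕ), ⟨⟨fun _ => 0, continuous_const⟩⟩, Set.range e, hclosed,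
    ⟨Topology.IsEmbedding.toHomeomorph (f := e) ⟨he_ind, he_inj⟩⟩⟩
end

section
/- A zero-dimensional T₁-space X is ℕ-compact if and only if every clopen ultrafilter in X with the countable intersection property is fixed (has nonempty intersection). -/
open Set Topology OnePoint TopologicalSpace

/-- A filter in a family `R` of subsets of `X`. -/
def IsFilterIn {X : Type*} (R F : Set (Set X)) : Prop :=
  F ⊆ R ∧ F.Nonempty ∧ ∅ ∉ F ∧
    (∀ A ∈ F, ∀ B ∈ F, A ∩ B ∈ F) ∧
    (∀ A ∈ F, ∀ B ∈ R, A ⊆ B → B ∈ F)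

/-- An ultrafilter (maximal filter) in a family `R` of subsets of `X`. -/
def IsUltrafilterIn {X : Type*} (R F : Set (Set X)) : Prop :=
  IsFilterIn R F ∧ ∀ G, IsFilterIn R G → F ⊆ G → G = F

section Helpers

variable {X : Type*} [TopologicalSpace X]

open Classical in
/-- `ℕ`-valued indicator function of a set. -/
noncomputable def indK (A : Set X) (x : X) : ℕ := if x ∈ A then 1 else 0

lemma indK_eq_one {A : Set X} {x : X} : indK A x = 1 ↔ x ∈ A := by
  unfold indK; split <;> simp_all

lemma indK_eq_zero {A : Set X} {x : X} : indK A x = 0 ↔ x ∉ A := by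
  unfold indK; split <;> simp_all

lemma continuous_indK {A : Set X} (hA : IsClopen A) : Continuous (indK A) := by
  classical
  rw [continuous_def]
  intro S _
  have : indK A ⁻¹' S = (if (1:ℕ) ∈ S then A else ∅) ∪ (if (0:ℕ) ∈ S then Aᶜ else ∅) := by
    ext x
    by_cases hx : x ∈ A <;> simp only [mem_preimage, indK, if_pos, if_neg, hx, ite_true,
      ite_false] <;> split_ifs <;> simp_all
  rw [this]
  apply IsOpen.union <;> split_ifs <;>
    simp [hA.isOpen, hA.compl.isOpen, isOpen_empty]

/-- A filter in the clopen algebra that contains `A` or `Aᶜ` for every clopen `A` is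
an ultrafilter. -/
lemma ultra_of_prime {F : Set (Set X)}
    (hF : IsFilterIn {A : Set X | IsClopen A} F)
    (hp : ∀ A : Set X, IsClopen A → A ∈ F ∨ Aᶜ ∈ F) :
    IsUltrafilterIn {A : Set X | IsClopen A} F := by
  refine ⟨hF, fun G hG hFG => ?_⟩
  refine Set.Subset.antisymm (fun B hB => ?_) hFG
  rcases hp B (hG.1 hB) with h | h
  · exact h
  · exact absurd (by simpa using hG.2.2.2.1 B hB Bᶜ (hFG h)) hG.2.2.1

/-- If every member of an ultrafilter in the clopen algebra meets the clopen set `D`,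
then `D` belongs to the ultrafilter. -/
lemma mem_of_inter_nonempty {F : Set (Set X)}
    (hF : IsUltrafilterIn {A : Set X | IsClopen A} F) {D : Set X} (hD : IsClopen D)
    (h : ∀ B ∈ F, (B ∩ D).Nonempty) : D ∈ F := by
  obtain ⟨⟨hsub, ⟨A₀, hA₀⟩, hemp, hint, hup⟩, hmax⟩ := hF
  set G := {C : Set X | IsClopen C ∧ ∃ B ∈ F, B ∩ D ⊆ C} with hGdef
  have hGfil : IsFilterIn {A : Set X | IsClopen A} G := by
    refine ⟨fun C hC => hC.1, ⟨D, hD, A₀, hA₀, inter_subset_right⟩, ?_, ?_, ?_⟩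
    · rintro ⟨-, B, hB, hBD⟩
      exact absurd (subset_empty_iff.mp hBD) ((h B hB).ne_empty)
    · rintro C₁ ⟨hC₁, B₁, hB₁, hBD₁⟩ C₂ ⟨hC₂, B₂, hB₂, hBD₂⟩
      refine ⟨hC₁.inter hC₂, B₁ ∩ B₂, hint _ hB₁ _ hB₂, ?_⟩
      intro x hx
      exact ⟨hBD₁ ⟨hx.1.1, hx.2⟩, hBD₂ ⟨hx.1.2, hx.2⟩⟩
    · rintro C₁ ⟨hC₁, B₁, hB₁, hBD₁⟩ C₂ hC₂ hsub₁₂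
      exact ⟨hC₂, B₁, hB₁, hBD₁.trans hsub₁₂⟩
  have hGF : G = F := hmax G hGfil (fun B hB => ⟨hsub hB, B, hB, inter_subset_left⟩)
  rw [← hGF]
  exact ⟨hD, A₀, hA₀, inter_subset_right⟩

/-- An ultrafilter in the clopen algebra contains `A` or `Aᶜ` for every clopen `A`. -/
lemma prime_of_ultra {F : Set (Set X)}
    (hF : IsUltrafilterIn {A : Set X | IsClopen A} F) :
    ∀ A : Set X, IsClopen A → A ∈ F ∨ Aᶜ ∈ F := by
  intro A hA
  by_cases hc : ∀ B ∈ F, (B ∩ A).Nonempty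
  · exact Or.inl (mem_of_inter_nonempty hF hA hc)
  · push_neg at hc
    obtain ⟨B₀, hB₀, hB₀A⟩ := hc
    rw [← not_nonempty_iff_eq_empty] at hB₀A
    rw [not_nonempty_iff_eq_empty] at hB₀A
    refine Or.inr (mem_of_inter_nonempty hF hA.compl ?_)
    intro B hB
    have hBB₀ : B ∩ B₀ ∈ F := hF.1.2.2.2.1 _ hB _ hB₀
    rcases eq_empty_or_nonempty (B ∩ B₀) with hE | ⟨x, hx⟩
    · exact absurd (hE ▸ hBB₀) hF.1.2.2.1
    · refine ⟨x, hx.1, fun hxA => ?_⟩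
      have hxm : x ∈ B₀ ∩ A := ⟨hx.2, hxA⟩
      rw [hB₀A] at hxm
      exact hxm

/-- Finite intersections of members of a filter, together with a member, stay in the filter. -/
lemma finset_inter_mem {F : Set (Set X)}
    (hF : IsFilterIn {A : Set X | IsClopen A} F) {ι : Type*} (t : Finset ι)
    (B : ι → Set X) (hB : ∀ j ∈ t, B j ∈ F) {A : Set X} (hA : A ∈ F) :
    A ∩ ⋂ j ∈ t, B j ∈ F := by
  classical
  induction t using Finset.induction with
  | empty => simpa using hA
  | @insert a t ha ih =>
    have h1 : A ∩ ⋂ j ∈ t, B j ∈ F := ih (fun j hj => hB j (Finset.mem_insert_of_mem hj))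
    have h2 : (A ∩ ⋂ j ∈ t, B j) ∩ B a ∈ F :=
      hF.2.2.2.1 _ h1 _ (hB a (Finset.mem_insert_self a t))
    have heq : A ∩ ⋂ j ∈ insert a t, B j = (A ∩ ⋂ j ∈ t, B j) ∩ B a := by
      rw [Finset.set_biInter_insert]
      ext x
      simp only [mem_inter_iff, mem_iInter]
      tauto
    rw [heq]
    exact h2

end Helpers

theorem herrlich_chew {X : Type u} [TopologicalSpace X] [T1Space X]
    (hzd : IsTopologicalBasis {A : Set X | IsClopen A}) :
    NCompact X ↔
      ∀ U : Set (Set X), IsUltrafilterIn {A : Set X | IsClopen A} U →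
        (∀ S ⊆ U, S.Countable → S.Nonempty → (⋂₀ S).Nonempty) →
        (⋂₀ U).Nonempty := by
  constructor
  · rintro ⟨J, hJ, s, hs, ⟨h⟩⟩ U hU hcip
    classical
    set e : X → J → ℕ := fun x => (h x : J → ℕ) with he
    have hecont : Continuous e := continuous_subtype_val.comp h.continuous
    have hemb : IsEmbedding e := IsEmbedding.subtypeVal.comp h.isEmbedding
    have hrangeeq : range e = s := by
      ext w
      constructor
      · rintro ⟨x, rfl⟩; exact (h x).2
      · intro hw; exact ⟨h.symm ⟨w, hw⟩, by simp [he]⟩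
    have hrange : IsClosed (range e) := hrangeeq ▸ hs
    obtain ⟨hUfil, -⟩ := id hU
    have hprime := prime_of_ultra hU
    have hAclo : ∀ (j : J) (n : ℕ), IsClopen ((fun x => e x j) ⁻¹' {n}) :=
      fun j n => (isClopen_discrete {n}).preimage ((continuous_apply j).comp hecont)
    have hzex : ∀ j : J, ∃ n, (fun x => e x j) ⁻¹' {n} ∈ U := by
      intro j
      by_contra hcon
      push_neg at hcon
      have hcompl : ∀ n, ((fun x => e x j) ⁻¹' {n})ᶜ ∈ U := fun n =>
        (hprime _ (hAclo j n)).resolve_left (hcon n)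
      have hne : (range fun n => ((fun x => e x j) ⁻¹' {n})ᶜ).Nonempty := ⟨_, mem_range_self 0⟩
      obtain ⟨x, hx⟩ := hcip _ (by rintro _ ⟨n, rfl⟩; exact hcompl n) (countable_range _) hne
      exact hx (((fun y => e y j) ⁻¹' {e x j})ᶜ) ⟨e x j, rfl⟩ rfl
    choose z hz using hzex
    have hzrange : z ∈ range e := by
      by_contra hzr
      obtain ⟨t, V, hV, hVsub⟩ := isOpen_pi_iff.mp hrange.isOpen_compl z hzr
      obtain ⟨A₀, hA₀⟩ := hUfil.2.1
      have hmem := finset_inter_mem hUfil t (fun j => (fun x => e x j) ⁻¹' {z j})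
        (fun j _ => hz j) hA₀
      have hempty : A₀ ∩ ⋂ j ∈ t, (fun x => e x j) ⁻¹' {z j} = ∅ := by
        ext x
        simp only [mem_inter_iff, mem_iInter, mem_preimage, mem_singleton_iff,
          mem_empty_iff_false, iff_false, not_and]
        intro _ hx
        have hxp : e x ∈ (↑t : Set J).pi V := fun j hj => (hx j hj) ▸ (hV j hj).2
        exact hVsub hxp ⟨x, rfl⟩
      rw [hempty] at hmem
      exact hUfil.2.2.1 hmem
    obtain ⟨x₀, hx₀⟩ := hzrange
    subst hx₀
    refine ⟨x₀, fun A hA => ?_⟩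
    by_contra hxA
    have hAclop : IsClopen A := hUfil.1 hA
    have h1 : Aᶜ ∈ 𝓝 x₀ := hAclop.compl.isOpen.mem_nhds hxA
    have h2 : Aᶜ ∈ Filter.comap e (𝓝 (e x₀)) := by
      rw [← hemb.toIsInducing.nhds_eq_comap]; exact h1
    obtain ⟨V, hVnhds, hVsub⟩ := Filter.mem_comap.mp h2
    obtain ⟨W, hWV, hWopen, hzW⟩ := mem_nhds_iff.mp hVnhds
    obtain ⟨t, V', hV', hV'sub⟩ := isOpen_pi_iff.mp hWopen _ hzW
    have hmem := finset_inter_mem hUfil t (fun j => (fun x => e x j) ⁻¹' {e x₀ j})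
      (fun j _ => hz j) hA
    have hempty : A ∩ ⋂ j ∈ t, (fun x => e x j) ⁻¹' {e x₀ j} = ∅ := by
      ext x
      simp only [mem_inter_iff, mem_iInter, mem_preimage, mem_singleton_iff,
        mem_empty_iff_false, iff_false, not_and]
      intro hxA' hx
      have hxp : e x ∈ (↑t : Set J).pi V' := fun j hj => (hx j hj) ▸ (hV' j hj).2
      exact hVsub (hWV (hV'sub hxp)) hxA'
    rw [hempty] at hmem
    exact hUfil.2.2.1 hmem
  · intro hyp
    classical
    set e : X → C(X, ℕ) → ℕ := fun x f => f x with he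
    have hecont : Continuous e := continuous_pi fun f => f.continuous
    have hinj : Function.Injective e := by
      intro x y hxy
      by_contra hne
      have hmem : ({y}ᶜ : Set X) ∈ 𝓝 x :=
        isOpen_compl_singleton.mem_nhds (by simpa using hne)
      obtain ⟨A, hAclo, hxA, hAsub⟩ := hzd.mem_nhds_iff.mp hmem
      have hfy : indK A y = 0 := indK_eq_zero.mpr (fun hy => hAsub hy rfl)
      have hfx : indK A x = 1 := indK_eq_one.mpr hxA
      have hcongr : e x ⟨indK A, continuous_indK hAclo⟩ = e y ⟨indK A, continuous_indK hAclo⟩ := by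
        rw [hxy]
      simp only [he, ContinuousMap.coe_mk, hfx, hfy] at hcongr
      exact one_ne_zero hcongr
    have hind : IsInducing e := by
      rw [isInducing_iff_nhds]
      intro x
      refine le_antisymm (hecont.tendsto x).le_comap (fun U hU => ?_)
      obtain ⟨A, hAclo, hxA, hAsub⟩ := hzd.mem_nhds_iff.mp hU
      refine Filter.mem_comap.mpr
        ⟨(fun w => w ⟨indK A, continuous_indK hAclo⟩) ⁻¹' {1}, ?_, ?_⟩
      · refine IsOpen.mem_nhds ((isOpen_discrete _).preimage (continuous_apply _)) ?_
        simp only [he, mem_preimage, ContinuousMap.coe_mk, mem_singleton_iff]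
        exact indK_eq_one.mpr hxA
      · intro y hy
        simp only [he, mem_preimage, ContinuousMap.coe_mk, mem_singleton_iff] at hy
        exact hAsub (indK_eq_one.mp hy)
    have hemb : IsEmbedding e := ⟨hind, hinj⟩
    have hclosed : IsClosed (range e) := by
      refine isClosed_of_closure_subset (fun z hzc => ?_)
      have key : ∀ t : Finset C(X,ℕ), ∃ x : X, ∀ f ∈ t, f x = z f := by
        intro t
        have hopen : IsOpen ((↑t : Set C(X,ℕ)).pi fun f => {z f}) :=
          isOpen_set_pi t.finite_toSet fun f _ => isOpen_discrete _
        have hzmem : z ∈ (↑t : Set C(X,ℕ)).pi fun f => {z f} := fun f _ => rfl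
        obtain ⟨w, hw1, x, rfl⟩ := mem_closure_iff.mp hzc _ hopen hzmem
        exact ⟨x, fun f hf => hw1 f hf⟩
      set U : Set (Set X) := {A | IsClopen A ∧ ∃ f : C(X,ℕ), f ⁻¹' {z f} ⊆ A} with hUdef
      have hAfU : ∀ f : C(X,ℕ), (f ⁻¹' {z f}) ∈ U := fun f =>
        ⟨(isClopen_discrete _).preimage f.continuous, f, Subset.rfl⟩
      have hfilU : IsFilterIn {A : Set X | IsClopen A} U := by
        refine ⟨fun A hA => hA.1,
          ⟨univ, isClopen_univ, ⟨⟨fun _ => 0, continuous_const⟩, subset_univ _⟩⟩, ?_, ?_, ?_⟩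
        · rintro ⟨-, f, hf⟩
          obtain ⟨x, hx⟩ := key {f}
          exact hf (show x ∈ f ⁻¹' {z f} by
            simp [hx f (Finset.mem_singleton_self f)])
        · rintro A ⟨hAclo, f, hfA⟩ B ⟨hBclo, g, hgB⟩
          have hcont : Continuous fun x => Nat.pair (f x) (g x) :=
            (continuous_of_discreteTopology
              (f := fun p : ℕ × ℕ => Nat.pair p.1 p.2)).comp
              (f.continuous.prodMk g.continuous)
          set p : C(X,ℕ) := ⟨fun x => Nat.pair (f x) (g x), hcont⟩ with hpdef
          obtain ⟨x', hx'⟩ := key {f, g, p}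
          have hzp : z p = Nat.pair (z f) (z g) := by
            have h1 : f x' = z f := hx' f (by simp)
            have h2 : g x' = z g := hx' g (by simp)
            have h3 : p x' = z p := hx' p (by simp)
            rw [← h3, hpdef, ContinuousMap.coe_mk, h1, h2]
          refine ⟨hAclo.inter hBclo, p, ?_⟩
          intro x hx
          have hx' : Nat.pair (f x) (g x) = Nat.pair (z f) (z g) := by
            have : p x = z p := hx
            rwa [hzp, hpdef, ContinuousMap.coe_mk] at this
          obtain ⟨hf1, hg1⟩ := Nat.pair_eq_pair.mp hx'
          exact ⟨hfA (by simp [hf1]), hgB (by simp [hg1])⟩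
        · rintro A ⟨hAclo, f, hfA⟩ B hBclo hABsub
          exact ⟨hBclo, f, hfA.trans hABsub⟩
      have hprimeU : ∀ A : Set X, IsClopen A → A ∈ U ∨ Aᶜ ∈ U := by
        intro A hA
        set f : C(X,ℕ) := ⟨indK A, continuous_indK hA⟩ with hfdef
        obtain ⟨x, hx⟩ := key {f}
        have hfx : indK A x = z f := hx f (Finset.mem_singleton_self f)
        by_cases hxA : x ∈ A
        · left
          refine ⟨hA, f, fun y hy => ?_⟩
          have : indK A y = z f := hy
          rw [← hfx] at this
          rw [indK_eq_one.mpr hxA] at this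
          exact indK_eq_one.mp this
        · right
          refine ⟨hA.compl, f, fun y hy => ?_⟩
          have : indK A y = z f := hy
          rw [← hfx] at this
          rw [indK_eq_zero.mpr hxA] at this
          exact indK_eq_zero.mp this
      have hcipU : ∀ S ⊆ U, S.Countable → S.Nonempty → (⋂₀ S).Nonempty := by
        intro S hSU hScount hSne
        by_contra hempty
        rw [not_nonempty_iff_eq_empty] at hempty
        obtain ⟨B, hB⟩ := Set.Countable.exists_eq_range hScount hSne
        have hcover : ∀ x : X, ∃ n, x ∉ B n := by
          intro x
          by_contra hc
          push_neg at hc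
          have hxmem : x ∈ ⋂₀ S := by
            rw [hB]; rintro _ ⟨n, rfl⟩; exact hc n
          rw [hempty] at hxmem
          exact hxmem
        have hBclo : ∀ n, IsClopen (B n) := fun n => (hSU (hB ▸ mem_range_self n)).1
        set g : X → ℕ := fun x => Nat.find (hcover x) with hgdef
        have hgcont : Continuous g := by
          have hpre : ∀ n, IsOpen (g ⁻¹' {n}) := by
            intro n
            have hgeq : g ⁻¹' {n} = (B n)ᶜ ∩ ⋂ m ∈ Finset.range n, B m := by
              ext x
              simp only [mem_preimage, mem_singleton_iff, hgdef, Nat.find_eq_iff,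
                mem_inter_iff, mem_compl_iff, mem_iInter, Finset.mem_range, not_not]
            rw [hgeq]
            exact ((hBclo n).compl.isOpen).inter
              (isOpen_biInter_finset fun m _ => (hBclo m).isOpen)
          exact continuous_discrete_rng.mpr hpre
        set gc : C(X,ℕ) := ⟨g, hgcont⟩ with hgcdef
        have hBz : B (z gc) ∈ U := hSU (hB ▸ mem_range_self (z gc))
        obtain ⟨-, f, hf⟩ := hBz
        obtain ⟨x, hx⟩ := key {gc, f}
        have h1 : g x = z gc := hx gc (by simp)
        have h2 : f x = z f := hx f (by simp)
        have hxB : x ∈ B (z gc) := hf (by simp [h2])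
        have hxnB : x ∉ B (g x) := Nat.find_spec (hcover x)
        rw [h1] at hxnB
        exact hxnB hxB
      obtain ⟨x₀, hx₀⟩ := hyp U (ultra_of_prime hfilU hprimeU) hcipU
      refine ⟨x₀, funext fun f => ?_⟩
      exact hx₀ _ (hAfU f)
    exact ⟨C(X,ℕ), ⟨⟨fun _ => 0, continuous_const⟩⟩, range e, hclosed,
      ⟨hemb.toHomeomorph⟩⟩
end

section
/- Let E be a nonempty Hausdorff space, X and Y Hausdorff spaces, and f : X → Y continuous. If X is E-compact and B ⊆ Y is an E-compact subspace of Y, then the subspace f⁻¹[B] of X is E-compact. -/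
open Set Topology

universe u v w

/-- A space is `E`-compact if it is homeomorphic to a closed subspace of a power of `E`. -/
def ECompact (E : Type u) [TopologicalSpace E] (X : Type v) [TopologicalSpace X] : Prop :=
  ∃ (J : Type (max u v)) (_ : Nonempty J) (s : Set (J → E)), IsClosed s ∧ Nonempty (X ≃ₜ s)

/-- If `Z` admits a closed embedding into some power `E^K` (with `K` in an arbitrary
universe), then `Z` is `E`-compact: the evaluation map into `E^{C(Z,E)}` is a closed
embedding. -/
lemma ecompact_of_isClosedEmbedding {E : Type u} [TopologicalSpace E] [T2Space E] [Nonempty E]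
    {Z : Type v} [TopologicalSpace Z] {K : Type*} {g : Z → K → E}
    (hg : IsClosedEmbedding g) : ECompact E Z := by
  refine ⟨C(Z, E), ⟨ContinuousMap.const Z (Classical.arbitrary E)⟩, ?_⟩
  let ev : Z → C(Z, E) → E := fun z φ => φ z
  have hev_cont : Continuous ev := continuous_pi fun φ => φ.continuous
  let c : K → C(Z, E) := fun k => ⟨fun z => g z k, (continuous_apply k).comp hg.continuous⟩
  let p : (C(Z, E) → E) → K → E := fun w k => w (c k)
  have hp : Continuous p := continuous_pi fun k => continuous_apply (c k)
  have hcomp : p ∘ ev = g := rfl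
  have hev_emb : IsEmbedding ev :=
    IsEmbedding.of_comp hev_cont hp (by rw [hcomp]; exact hg.toIsEmbedding)
  let q : Set.range g → Z := (hg.toIsEmbedding.toHomeomorph).symm
  have hq : Continuous q := Homeomorph.continuous _
  have hqg : ∀ (z : Z) (h : g z ∈ Set.range g), q ⟨g z, h⟩ = z := by
    intro z h
    have : (⟨g z, h⟩ : Set.range g) = hg.toIsEmbedding.toHomeomorph z :=
      Subtype.ext rfl
    rw [this]
    exact Homeomorph.symm_apply_apply _ _
  let A : Set (C(Z, E) → E) := p ⁻¹' Set.range g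
  have hA : IsClosed A := hg.isClosed_range.preimage hp
  let uu : A → Z := fun w => q ⟨p w.1, w.2⟩
  have hu : Continuous uu := hq.comp ((hp.comp continuous_subtype_val).subtype_mk _)
  let S : Set A := {w | w.1 = ev (uu w)}
  have hS : IsClosed S := isClosed_eq continuous_subtype_val (hev_cont.comp hu)
  have hrange : Set.range ev = Subtype.val '' S := by
    ext w
    constructor
    · rintro ⟨z, rfl⟩
      have hmem : ev z ∈ A := ⟨z, rfl⟩
      refine ⟨⟨ev z, hmem⟩, ?_, rfl⟩
      show ev z = ev (uu ⟨ev z, hmem⟩)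
      have : uu ⟨ev z, hmem⟩ = z := hqg z _
      rw [this]
    · rintro ⟨⟨w, hw⟩, hwS, rfl⟩
      exact ⟨uu ⟨w, hw⟩, hwS.symm⟩
  refine ⟨Set.range ev, ?_, ⟨hev_emb.toHomeomorph⟩⟩
  rw [hrange]
  exact hA.isClosedEmbedding_subtypeVal.isClosedMap _ hS

theorem eCompact_preimage {E : Type u} [TopologicalSpace E] [T2Space E] [Nonempty E]
    {X : Type v} [TopologicalSpace X] [T2Space X] {Y : Type w} [TopologicalSpace Y] [T2Space Y]
    (f : X → Y) (hf : Continuous f) (hX : ECompact E X)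
    (B : Set Y) (hB : ECompact E ↥B) : ECompact E ↥(f ⁻¹' B) := by
  obtain ⟨J, hJ, s, hs, ⟨eX⟩⟩ := hX
  obtain ⟨K, hK, t, ht, ⟨eB⟩⟩ := hB
  let h1 : ↥(f ⁻¹' B) → X × B := fun z => (z.1, ⟨f z.1, z.2⟩)
  have h1c : Continuous h1 :=
    continuous_subtype_val.prodMk ((hf.comp continuous_subtype_val).subtype_mk _)
  have h1emb : IsEmbedding h1 :=
    IsEmbedding.of_comp h1c continuous_fst IsEmbedding.subtypeVal
  have h1range : Set.range h1 = {p : X × B | f p.1 = (p.2 : Y)} := by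
    ext pb
    constructor
    · rintro ⟨z, rfl⟩
      rfl
    · intro h
      obtain ⟨x, b⟩ := pb
      have h' : f x = (b : Y) := h
      have hx : x ∈ f ⁻¹' B := by
        show f x ∈ B
        rw [h']; exact b.2
      refine ⟨⟨x, hx⟩, ?_⟩
      show (x, (⟨f x, hx⟩ : B)) = (x, b)
      exact congrArg (Prod.mk x) (Subtype.ext h')
  have h1closed : IsClosedEmbedding h1 :=
    ⟨h1emb, h1range ▸ isClosed_eq (hf.comp continuous_fst)
      (continuous_subtype_val.comp continuous_snd)⟩
  have h2closed : IsClosedEmbedding (eX.prodCongr eB) := (eX.prodCongr eB).isClosedEmbedding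
  have h3closed : IsClosedEmbedding (Prod.map (Subtype.val : s → J → E)
      (Subtype.val : t → K → E)) := by
    refine ⟨IsEmbedding.subtypeVal.prodMap IsEmbedding.subtypeVal, ?_⟩
    rw [Set.range_prodMap, Subtype.range_val, Subtype.range_val]
    exact hs.prod ht
  have h4closed : IsClosedEmbedding
      (Homeomorph.sumArrowHomeomorphProdArrow (ι := J) (ι' := K) (X := E)).symm :=
    (Homeomorph.sumArrowHomeomorphProdArrow.symm).isClosedEmbedding
  exact ecompact_of_isClosedEmbedding
    (h4closed.comp (h3closed.comp (h2closed.comp h1closed)))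
end

section
/- Let X be a completely regular T₁-space such that X = S ∪ K, where K is compact in X and the subspace S is realcompact. Then X is realcompact. -/
open Set Topology TopologicalSpace

universe u

/-- A space is realcompact if it is homeomorphic to a closed subspace of a power of `ℝ`. -/
def Realcompact (X : Type u) [TopologicalSpace X] : Prop :=
  ∃ (J : Type u) (_ : Nonempty J) (s : Set (J → ℝ)), IsClosed s ∧ Nonempty (X ≃ₜ s)

section aux
variable {Y : Type u} [TopologicalSpace Y]

/-- Evaluation map into `ℝ ^ C(Y,ℝ)`. -/
def evMap (Y : Type u) [TopologicalSpace Y] : Y → C(Y, ℝ) → ℝ := fun y f => f y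

lemma continuous_evMap : Continuous (evMap Y) := continuous_pi fun f => f.continuous

/-- If `Y` is realcompact then the range of the evaluation map is closed. -/
lemma closed_range_evMap (h : Realcompact Y) : IsClosed (Set.range (evMap Y)) := by
  obtain ⟨J, ⟨j0⟩, s, hs, ⟨e⟩⟩ := h
  set F : J → C(Y, ℝ) := fun j =>
    ⟨fun y => (e y : J → ℝ) j, (continuous_apply j).comp (continuous_subtype_val.comp e.continuous)⟩
  set π : (C(Y, ℝ) → ℝ) → J → ℝ := fun p j => p (F j) with hπdef
  have hπ : Continuous π := continuous_pi fun j => continuous_apply (F j)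
  have hT : IsClosed (π ⁻¹' s) := hs.preimage hπ
  set T := π ⁻¹' s
  set r : T → Y := fun p => e.symm ⟨π p.1, p.2⟩ with hrdef
  have hr : Continuous r := e.symm.continuous.comp ((hπ.comp continuous_subtype_val).subtype_mk _)
  set E : Set T := {p | evMap Y (r p) = p.1} with hEdef
  have hE : IsClosed E := isClosed_eq (continuous_evMap.comp hr) continuous_subtype_val
  have key : Set.range (evMap Y) = Subtype.val '' E := by
    ext p
    constructor
    · rintro ⟨y, rfl⟩
      have h1 : π (evMap Y y) = (e y : J → ℝ) := funext fun j => rfl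
      have hmem : evMap Y y ∈ T := by
        show π (evMap Y y) ∈ s
        rw [h1]; exact (e y).2
      refine ⟨⟨evMap Y y, hmem⟩, ?_, rfl⟩
      show evMap Y (r ⟨evMap Y y, hmem⟩) = evMap Y y
      have : r ⟨evMap Y y, hmem⟩ = y := by
        show e.symm ⟨π (evMap Y y), hmem⟩ = y
        have : (⟨π (evMap Y y), hmem⟩ : s) = e y := Subtype.ext h1
        rw [this, e.symm_apply_apply]
      rw [this]
    · rintro ⟨⟨p, hp⟩, hpE, rfl⟩
      exact ⟨r ⟨p, hp⟩, hpE⟩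
  rw [key]
  exact (hT.isClosedEmbedding_subtypeVal.isClosedMap) E hE

lemma closure_comp₁ {p : C(Y, ℝ) → ℝ} (hp : p ∈ closure (Set.range (evMap Y)))
    (g : C(Y, ℝ)) {Φ : ℝ → ℝ} (hΦ : Continuous Φ) :
    p ⟨Φ ∘ g, hΦ.comp g.continuous⟩ = Φ (p g) := by
  have hcl : IsClosed {q : C(Y, ℝ) → ℝ | q ⟨Φ ∘ g, hΦ.comp g.continuous⟩ = Φ (q g)} :=
    isClosed_eq (continuous_apply _) (hΦ.comp (continuous_apply g))
  have hsub : Set.range (evMap Y) ⊆ {q | q ⟨Φ ∘ g, hΦ.comp g.continuous⟩ = Φ (q g)} := by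
    rintro _ ⟨y, rfl⟩; rfl
  exact (hcl.closure_subset_iff.2 hsub) hp

lemma closure_mul {p : C(Y, ℝ) → ℝ} (hp : p ∈ closure (Set.range (evMap Y)))
    (g h : C(Y, ℝ)) : p (g * h) = p g * p h := by
  have hcl : IsClosed {q : C(Y, ℝ) → ℝ | q (g * h) = q g * q h} :=
    isClosed_eq (continuous_apply _) ((continuous_apply g).mul (continuous_apply h))
  have hsub : Set.range (evMap Y) ⊆ {q | q (g * h) = q g * q h} := by
    rintro _ ⟨y, rfl⟩; rfl
  exact (hcl.closure_subset_iff.2 hsub) hp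

lemma closure_add {p : C(Y, ℝ) → ℝ} (hp : p ∈ closure (Set.range (evMap Y)))
    (g h : C(Y, ℝ)) : p (g + h) = p g + p h := by
  have hcl : IsClosed {q : C(Y, ℝ) → ℝ | q (g + h) = q g + q h} :=
    isClosed_eq (continuous_apply _) ((continuous_apply g).add (continuous_apply h))
  have hsub : Set.range (evMap Y) ⊆ {q | q (g + h) = q g + q h} := by
    rintro _ ⟨y, rfl⟩; rfl
  exact (hcl.closure_subset_iff.2 hsub) hp

lemma closure_zero {p : C(Y, ℝ) → ℝ} (hp : p ∈ closure (Set.range (evMap Y))) :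
    p 0 = 0 := by
  have hcl : IsClosed {q : C(Y, ℝ) → ℝ | q 0 = 0} :=
    isClosed_eq (continuous_apply _) continuous_const
  have hsub : Set.range (evMap Y) ⊆ {q | q 0 = 0} := by
    rintro _ ⟨y, rfl⟩; rfl
  exact (hcl.closure_subset_iff.2 hsub) hp

lemma closure_sum {p : C(Y, ℝ) → ℝ} (hp : p ∈ closure (Set.range (evMap Y)))
    {ι : Type*} (t : Finset ι) (g : ι → C(Y, ℝ)) :
    p (∑ i ∈ t, g i) = ∑ i ∈ t, p (g i) := by
  classical
  induction t using Finset.cons_induction with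
  | empty => simpa using closure_zero hp
  | cons a t ha ih => rw [Finset.sum_cons, Finset.sum_cons, closure_add hp, ih]

lemma approx_of_mem_closure {ι : Type*} {A : Set (ι → ℝ)} {p : ι → ℝ}
    (hp : p ∈ closure A) (t : Finset ι) {ε : ℝ} (hε : 0 < ε) :
    ∃ a ∈ A, ∀ i ∈ t, |p i - a i| < ε := by
  set O : Set (ι → ℝ) := ⋂ i ∈ t, {r | |p i - r i| < ε} with hOdef
  have hO : IsOpen O := isOpen_biInter_finset fun i _ => by
    have : Continuous fun r : ι → ℝ => |p i - r i| :=
      (continuous_const.sub (continuous_apply i)).abs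
    exact isOpen_lt this continuous_const
  have hpO : p ∈ O := mem_iInter₂.2 fun i _ => by simpa using hε
  obtain ⟨a, haO, haA⟩ := (mem_closure_iff.1 hp) O hO hpO
  exact ⟨a, haA, fun i hi => mem_iInter₂.1 haO i hi⟩

end aux

section emb
variable {X : Type u} [TopologicalSpace X]

lemma embedding_evMap [T1Space X]
    (hcr : IsTopologicalBasis {U : Set X | ∃ f : X → ℝ, Continuous f ∧ U = {x | f x ≠ 0}}) :
    IsEmbedding (evMap X) := by
  constructor
  · refine IsInducing.mk (le_antisymm (continuous_iff_le_induced.mp continuous_evMap) ?_)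
    refine le_of_le_of_eq (le_generateFrom ?_) hcr.eq_generateFrom.symm
    rintro U ⟨f, hf, rfl⟩
    have : {x : X | f x ≠ 0} = evMap X ⁻¹' {q | q ⟨f, hf⟩ ≠ 0} := rfl
    rw [this]
    exact isOpen_induced (f := evMap X) (s := {q : C(X,ℝ) → ℝ | q ⟨f, hf⟩ ≠ 0})
      (show IsOpen ((fun q : C(X,ℝ) → ℝ => q ⟨f, hf⟩) ⁻¹' {x : ℝ | x ≠ 0}) from
        IsOpen.preimage (continuous_apply _) (isOpen_ne (x := (0:ℝ))))
  · intro x y hxy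
    by_contra hne
    obtain ⟨U, ⟨f, hf, rfl⟩, hxU, hUy⟩ :=
      hcr.exists_subset_of_mem_open (show x ∈ ({y}ᶜ : Set X) from hne)
        isClosed_singleton.isOpen_compl
    have hfy : f y = 0 := by
      by_contra h
      exact (hUy h) rfl
    have : f x = f y := congrFun hxy ⟨f, hf⟩
    rw [hfy] at this
    exact hxU this

end emb

theorem realcompact_of_union_compact {X : Type u} [TopologicalSpace X] [T1Space X]
    (hcr : IsTopologicalBasis
      {U : Set X | ∃ f : X → ℝ, Continuous f ∧ U = {x | f x ≠ 0}})
    (S K : Set X) (hK : IsCompact K) (hSK : S ∪ K = Set.univ)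
    (hS : Realcompact ↥S) : Realcompact X := by
  classical
  have hemb : IsEmbedding (evMap X) := embedding_evMap hcr
  suffices hclosed : IsClosed (Set.range (evMap X)) by
    exact ⟨C(X, ℝ), ⟨0⟩, Set.range (evMap X), hclosed,
      ⟨hemb.toHomeomorph⟩⟩
  have hSorK : ∀ x : X, x ∈ S ∨ x ∈ K := fun x => by
    have : x ∈ S ∪ K := hSK ▸ Set.mem_univ x
    exact this
  refine isClosed_of_closure_subset ?_
  intro p hp
  by_cases hpK : p ∈ evMap X '' K
  · exact Set.image_subset_range _ _ hpK
  -- Step 1: construct f ∈ C(X,ℝ), δ > 0 with f ≥ 0, f ≥ δ on K, p f = 0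
  obtain ⟨f, δ, hδ, hf0, hfK, hpf⟩ :
      ∃ (f : C(X, ℝ)) (δ : ℝ), 0 < δ ∧ (∀ x, 0 ≤ f x) ∧ (∀ x ∈ K, δ ≤ f x) ∧ p f = 0 := by
    have hgex : ∀ k : K, ∃ g : C(X, ℝ), (∀ y, 0 ≤ g y) ∧ p g = 0 ∧ 0 < g k := by
      rintro ⟨x, hx⟩
      have hne : evMap X x ≠ p := fun h => hpK ⟨x, hx, h⟩
      obtain ⟨f0, hf0ne⟩ := Function.ne_iff.mp hne
      have hΦ : Continuous fun t : ℝ => (t - p f0) ^ 2 :=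
        (continuous_id.sub continuous_const).pow 2
      refine ⟨⟨(fun t : ℝ => (t - p f0) ^ 2) ∘ f0, hΦ.comp f0.continuous⟩,
        fun y => sq_nonneg _, ?_, ?_⟩
      · rw [closure_comp₁ hp f0 hΦ]; simp
      · have hne0 : f0 x - p f0 ≠ 0 := sub_ne_zero.mpr hf0ne
        show (0 : ℝ) < (f0 x - p f0) ^ 2
        exact pow_two_pos_of_ne_zero hne0
    choose g hg0 hgp hgx using hgex
    have hUo : ∀ k : K, IsOpen {y | 0 < g k y} := fun k =>
      isOpen_lt continuous_const (g k).continuous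
    have hcov : K ⊆ ⋃ k : K, {y | 0 < g k y} := fun y hy =>
      Set.mem_iUnion.2 ⟨⟨y, hy⟩, hgx ⟨y, hy⟩⟩
    obtain ⟨t, ht⟩ := hK.elim_finite_subcover _ hUo hcov
    set f : C(X, ℝ) := ∑ k ∈ t, g k with hfdef
    have hpf : p f = 0 := by
      rw [hfdef, closure_sum hp]
      exact Finset.sum_eq_zero fun k _ => hgp k
    have hfapp : ∀ y, f y = ∑ k ∈ t, g k y := fun y => by
      rw [hfdef]
      exact ContinuousMap.sum_apply t g y
    have hf0 : ∀ y, 0 ≤ f y := fun y => by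
      rw [hfapp]; exact Finset.sum_nonneg fun k _ => hg0 k y
    have hfKpos : ∀ y ∈ K, 0 < f y := by
      intro y hy
      obtain ⟨k, hkt, hky⟩ := by
        have := ht hy
        simpa only [Set.mem_iUnion, exists_prop] using this
      rw [hfapp]
      exact lt_of_lt_of_le hky (Finset.single_le_sum (fun i _ => hg0 i y) hkt)
    rcases K.eq_empty_or_nonempty with hKe | hKne
    · exact ⟨f, 1, one_pos, hf0, by simp [hKe], hpf⟩
    · obtain ⟨x0, hx0K, hx0⟩ := hK.exists_isMinOn hKne f.continuous.continuousOn
      exact ⟨f, f x0, hfKpos x0 hx0K, hf0, fun y hy => hx0 hy, hpf⟩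
  -- Step 2: the cutoff u
  have hΦu : Continuous fun t : ℝ => max 0 (1 - 2 * t / δ) :=
    continuous_const.max
      ((continuous_const.sub ((continuous_const.mul continuous_id).div_const δ)))
  set u : C(X, ℝ) := ⟨(fun t : ℝ => max 0 (1 - 2 * t / δ)) ∘ f, hΦu.comp f.continuous⟩
    with hudef
  have hpu : p u = 1 := by
    rw [hudef, closure_comp₁ hp f hΦu, hpf]
    norm_num
  have hu_eq : ∀ x, u x = max 0 (1 - 2 * f x / δ) := fun x => rfl
  have hu0 : ∀ x, 0 ≤ u x := fun x => le_max_left _ _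
  have hu1 : ∀ x, u x ≤ 1 := fun x => by
    rw [hu_eq]
    have h1 : 1 - 2 * f x / δ ≤ 1 := by
      have := hf0 x
      have : 0 ≤ 2 * f x / δ := by positivity
      linarith
    exact max_le (by norm_num) h1
  have huK : ∀ x, δ / 2 ≤ f x → u x = 0 := fun x hx => by
    rw [hu_eq]
    have : 1 - 2 * f x / δ ≤ 0 := by
      rw [sub_nonpos, le_div_iff₀ hδ]
      linarith
    exact max_eq_left this
  -- Step 3: the extension operator G
  have hGex : ∀ g : C(↥S, ℝ), ∃ G : C(X, ℝ),
      (∀ (x : X) (hx : x ∈ S), G x = g ⟨x, hx⟩ * u x) ∧ ∀ (x : X), x ∉ S → G x = 0 := by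
    intro g
    set Gf : X → ℝ := fun x => if hx : x ∈ S then g ⟨x, hx⟩ * u x else 0 with hGfdef
    have hA : IsOpen {x : X | f x < δ} := isOpen_lt f.continuous continuous_const
    have hAS : ∀ x : X, f x < δ → x ∈ S := by
      intro x hx
      rcases hSorK x with h | h
      · exact h
      · exact absurd (hfK x h) (not_le.mpr hx)
    have hconA : ContinuousOn Gf {x : X | f x < δ} := by
      rw [continuousOn_iff_continuous_restrict]
      have heq : Set.domRestrict {x : X | f x < δ} Gf =
          fun a : {x : X | f x < δ} => g ⟨a.1, hAS a.1 a.2⟩ * u a.1 := by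
        funext a
        simp only [Set.domRestrict_apply, hGfdef, dif_pos (hAS a.1 a.2)]
      rw [heq]
      exact (g.continuous.comp (Continuous.subtype_mk continuous_subtype_val _)).mul
        (u.continuous.comp continuous_subtype_val)
    have hcont : Continuous Gf := by
      rw [continuous_iff_continuousAt]
      intro x
      rcases lt_or_ge (f x) δ with hx | hx
      · exact hconA.continuousAt (hA.mem_nhds hx)
      · have hB : IsOpen {y : X | δ / 2 < f y} := isOpen_lt continuous_const f.continuous
        have hxB : x ∈ {y : X | δ / 2 < f y} := by
          show δ / 2 < f x; linarith
        have hz : ∀ y ∈ {y : X | δ / 2 < f y}, Gf y = 0 := by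
          intro y hy
          by_cases hyS : y ∈ S
          · show Gf y = 0
            simp only [hGfdef]
            rw [dif_pos hyS, huK y (le_of_lt hy), mul_zero]
          · show Gf y = 0
            simp only [hGfdef]
            rw [dif_neg hyS]
        have hev : Gf =ᶠ[nhds x] fun _ => (0 : ℝ) :=
          Filter.eventuallyEq_of_mem (hB.mem_nhds hxB) hz
        exact continuousAt_const.congr hev.symm
    refine ⟨⟨Gf, hcont⟩, fun x hx => ?_, fun x hx => ?_⟩
    · show Gf x = _
      simp only [hGfdef]
      exact dif_pos hx
    · show Gf x = 0
      simp only [hGfdef]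
      exact dif_neg hx
  choose G hGS hGnS using hGex
  have hfS : ∀ x : X, f x < δ → x ∈ S := by
    intro x hx
    rcases hSorK x with h | h
    · exact h
    · exact absurd (hfK x h) (not_le.mpr hx)
  set q : C(↥S, ℝ) → ℝ := fun g => p (G g) with hqdef
  -- the key identity h * u = G (h.restrict S)
  have hmulu : ∀ h : C(X, ℝ), h * u = G (h.restrict S) := by
    intro h; ext x
    by_cases hx : x ∈ S
    · rw [ContinuousMap.mul_apply, hGS _ x hx, ContinuousMap.restrict_apply]
    · have hxK : x ∈ K := (hSorK x).resolve_left hx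
      rw [ContinuousMap.mul_apply, hGnS _ x hx, huK x (by linarith [hfK x hxK]), mul_zero]
  -- finite approximation helper
  have step : ∀ (I : Finset C(↥S, ℝ)) (ε₁ : ℝ), 0 < ε₁ → ε₁ ≤ δ / 2 →
      ∃ (x : X) (hxS : x ∈ S), f x < ε₁ ∧ |1 - u x| < ε₁ ∧
        ∀ g ∈ I, |q g - g ⟨x, hxS⟩ * u x| < ε₁ := by
    intro I ε₁ hε₁ hε₁δ
    obtain ⟨a, ⟨x, rfl⟩, hax⟩ :=
      approx_of_mem_closure hp (insert f (insert u (I.image G))) hε₁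
    have hfx : f x < ε₁ := by
      have h0 := hax f (Finset.mem_insert_self _ _)
      rw [hpf] at h0
      have h2 : |f x| < ε₁ := by rwa [zero_sub, abs_neg] at h0
      exact lt_of_le_of_lt (le_abs_self _) h2
    have hxS : x ∈ S := hfS x (by linarith)
    have hux : |1 - u x| < ε₁ := by
      have := hax u (Finset.mem_insert_of_mem (Finset.mem_insert_self _ _))
      rwa [hpu] at this
    refine ⟨x, hxS, hfx, hux, fun g hg => ?_⟩
    have := hax (G g)
      (Finset.mem_insert_of_mem (Finset.mem_insert_of_mem (Finset.mem_image_of_mem G hg)))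
    rwa [show evMap X x (G g) = g ⟨x, hxS⟩ * u x from hGS g x hxS] at this
  -- claim 2
  have claim2 : ∀ (I : Finset C(↥S, ℝ)) (ε : ℝ), 0 < ε →
      ∃ s : ↥S, ∀ g ∈ I, |q g - g s| < ε := by
    intro I ε hε
    by_cases hI : I.Nonempty
    · set M := I.sup' hI fun g => |q g| with hMdef
      have hM : ∀ g ∈ I, |q g| ≤ M := fun g hg => by
        rw [hMdef]; exact Finset.le_sup' (fun g => |q g|) hg
      have hM0 : 0 ≤ M := by
        obtain ⟨g0, hg0⟩ := hI
        exact (abs_nonneg (q g0)).trans (hM g0 hg0)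
      set ε₁ := min (δ / 2) (min (1 / 2) (ε / (2 * M + 4))) with hε₁def
      have hε₁pos : 0 < ε₁ :=
        lt_min (by linarith) (lt_min (by norm_num) (by positivity))
      obtain ⟨x, hxS, hfx, hux, hg⟩ := step I ε₁ hε₁pos (min_le_left _ _)
      refine ⟨⟨x, hxS⟩, fun g hgI => ?_⟩
      set s : ↥S := ⟨x, hxS⟩
      have h1 := hg g hgI
      have hε₁half : ε₁ ≤ 1 / 2 := le_trans (min_le_right _ _) (min_le_left _ _)
      have hε₁ε : ε₁ ≤ ε / (2 * M + 4) := le_trans (min_le_right _ _) (min_le_right _ _)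
      have hux1 : 1 - ε₁ ≤ u x := by
        have := abs_lt.mp hux; linarith [this.2]
      have huxhalf : 1 / 2 ≤ u x := by linarith
      have h1' := abs_lt.mp h1
      have hq1 : q g ≤ |q g| := le_abs_self _
      have hq2 : -|q g| ≤ q g := neg_abs_le _
      have hgsux : |g s * u x| < |q g| + ε₁ := abs_lt.mpr ⟨by linarith [h1'.1, h1'.2], by linarith [h1'.1, h1'.2]⟩
      have habsmul : |g s| * u x = |g s * u x| := by
        rw [abs_mul, abs_of_nonneg (hu0 x)]
      have hMg := hM g hgI
      have hgs : |g s| ≤ 2 * M + 1 := by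
        nlinarith [abs_nonneg (g s), hu1 x]
      have htri : |q g - g s| ≤ |q g - g s * u x| + |g s| * |u x - 1| := by
        calc |q g - g s| = |(q g - g s * u x) + g s * (u x - 1)| := by
              congr 1; ring
          _ ≤ |q g - g s * u x| + |g s * (u x - 1)| := abs_add_le _ _
          _ = |q g - g s * u x| + |g s| * |u x - 1| := by rw [abs_mul]
      have hux1' : |u x - 1| ≤ ε₁ := by
        rw [abs_sub_comm]; exact le_of_lt hux
      have hbound : |g s| * |u x - 1| ≤ (2 * M + 1) * ε₁ :=
        mul_le_mul hgs hux1' (abs_nonneg _) (by linarith)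
      have hM4 : (0 : ℝ) < 2 * M + 4 := by linarith
      have hfin : (2 * M + 2) * ε₁ < ε := by
        have h7 : (2 * M + 2) * ε₁ ≤ (2 * M + 2) * (ε / (2 * M + 4)) :=
          mul_le_mul_of_nonneg_left hε₁ε (by linarith)
        have h8 : (2 * M + 2) * (ε / (2 * M + 4)) < ε := by
          rw [mul_div_assoc', div_lt_iff₀ hM4]
          nlinarith
        linarith
      calc |q g - g s| ≤ |q g - g s * u x| + |g s| * |u x - 1| := htri
        _ < ε₁ + (2 * M + 1) * ε₁ := by linarith [h1, hbound]
        _ = (2 * M + 2) * ε₁ := by ring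
        _ < ε := hfin
    · obtain ⟨x, hxS, _, _, _⟩ := step ∅ (min (δ / 2) 1)
        (lt_min (by linarith) one_pos) (min_le_left _ _)
      exact ⟨⟨x, hxS⟩, fun g hg => absurd hg (fun h => hI ⟨g, h⟩)⟩
  -- q lies in the closure of the range of ev_S
  have hqcl : q ∈ closure (Set.range (evMap ↥S)) := by
    rw [mem_closure_iff]
    intro O hO hqO
    obtain ⟨I, w, hw, hsub⟩ := isOpen_pi_iff.mp hO q hqO
    have hball : ∀ a ∈ I, ∃ e : ℝ, 0 < e ∧ Metric.ball (q a) e ⊆ w a := by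
      intro a ha
      obtain ⟨e, he, hb⟩ := Metric.isOpen_iff.mp (hw a ha).1 (q a) (hw a ha).2
      exact ⟨e, he, hb⟩
    choose! εf hεf1 hεf2 using hball
    by_cases hI : I.Nonempty
    · set ε0 := I.inf' hI εf with hε0def
      have hε0 : 0 < ε0 := by
        rw [hε0def, Finset.lt_inf'_iff]
        exact fun a ha => hεf1 a ha
      obtain ⟨s, hs⟩ := claim2 I ε0 hε0
      refine ⟨evMap ↥S s, hsub ?_, Set.mem_range_self s⟩
      rw [Set.mem_pi]
      intro a ha
      have ham : a ∈ I := ha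
      apply hεf2 a ham
      rw [Metric.mem_ball, Real.dist_eq]
      calc |evMap ↥S s a - q a| = |q a - a s| := by rw [abs_sub_comm]; rfl
        _ < ε0 := hs a ham
        _ ≤ εf a := Finset.inf'_le εf ham
    · obtain ⟨s, _⟩ := claim2 ∅ 1 one_pos
      refine ⟨evMap ↥S s, hsub ?_, Set.mem_range_self s⟩
      rw [Set.mem_pi]
      intro a ha
      exact absurd ha (fun h => hI ⟨a, h⟩)
  obtain ⟨s₀, hs₀⟩ := (closed_range_evMap hS).closure_subset hqcl
  refine ⟨(s₀ : X), funext fun h => ?_⟩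
  have h1 : p h = p (h * u) := by rw [closure_mul hp, hpu, mul_one]
  have h2 : p (h * u) = q (h.restrict S) := by rw [hmulu h]
  have h3 : q (h.restrict S) = (h.restrict S) s₀ := (congrFun hs₀ (h.restrict S)).symm
  show evMap X (s₀ : X) h = p h
  rw [h1, h2, h3]
  rfl
end

section
/- Let X be a zero-dimensional T₁-space such that X = S ∪ K, where K is compact in X and the subspace S is ℕ-compact. Then X is ℕ-compact. -/
open Set Topology TopologicalSpace

/-- The canonical evaluation map of a space into `ℕ` to the power of `C(Y, ℕ)`. -/
def NCompactAux.ev (Y : Type v) [TopologicalSpace Y] : Y → (C(Y, ℕ) → ℕ) :=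
  fun x g => g x

namespace NCompactAux

variable {Y : Type v} [TopologicalSpace Y]

open scoped Classical

lemma continuous_ev : Continuous (ev Y) :=
  continuous_pi fun g => g.continuous

lemma mem_closure_range_ev_iff {y : C(Y, ℕ) → ℕ} :
    y ∈ closure (range (ev Y)) ↔ ∀ T : Finset C(Y, ℕ), ∃ x : Y, ∀ g ∈ T, g x = y g := by
  constructor
  · intro hy T
    have hopen : IsOpen ((T : Set C(Y, ℕ)).pi fun g => {y g}) :=
      isOpen_set_pi T.finite_toSet fun g _ => isOpen_discrete _
    have hm : y ∈ (T : Set C(Y, ℕ)).pi fun g => {y g} := fun g _ => rfl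
    obtain ⟨z, hzU, x, rfl⟩ := mem_closure_iff.mp hy _ hopen hm
    exact ⟨x, fun g hg => hzU g hg⟩
  · intro H
    rw [mem_closure_iff]
    intro o ho hyo
    obtain ⟨I, u, hu, hsub⟩ := isOpen_pi_iff.mp ho y hyo
    obtain ⟨x, hx⟩ := H I
    refine ⟨ev Y x, hsub fun g hg => ?_, mem_range_self x⟩
    show g x ∈ u g
    rw [hx g hg]
    exact (hu g hg).2

/-- On an `ℕ`-compact space, the canonical evaluation map has closed range. -/
lemma isClosed_range_ev {Z : Type v} [TopologicalSpace Z] (hZ : NCompact Z) :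
    IsClosed (range (ev Z)) := by
  classical
  apply isClosed_of_closure_subset
  intro y hy
  have P := mem_closure_range_ev_iff.mp hy
  obtain ⟨J', ⟨j0⟩, s, hs, ⟨h⟩⟩ := hZ
  let c : J' → C(Z, ℕ) := fun j =>
    ⟨fun z => (h z : J' → ℕ) j,
      (continuous_apply j).comp (continuous_subtype_val.comp h.continuous)⟩
  let w : J' → ℕ := fun j => y (c j)
  have hws : w ∈ s := by
    refine hs.closure_subset ?_
    rw [mem_closure_iff]
    intro o ho hwo
    obtain ⟨I, u, hu, hsub⟩ := isOpen_pi_iff.mp ho w hwo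
    obtain ⟨z, hz⟩ := P (I.image c)
    refine ⟨(h z : J' → ℕ), hsub fun j hj => ?_, (h z).2⟩
    show (h z : J' → ℕ) j ∈ u j
    rw [show (h z : J' → ℕ) j = w j from hz (c j) (Finset.mem_image_of_mem c hj)]
    exact (hu j hj).2
  set z0 : Z := h.symm ⟨w, hws⟩ with hz0
  refine ⟨z0, funext fun g => ?_⟩
  show g z0 = y g
  have hcont : Continuous fun v : s => g (h.symm v) := g.continuous.comp h.symm.continuous
  have hopen : IsOpen {v : s | g (h.symm v) = g z0} := by
    have : {v : s | g (h.symm v) = g z0} = (fun v : s => g (h.symm v)) ⁻¹' {g z0} := rfl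
    rw [this]
    exact (isOpen_discrete _).preimage hcont
  obtain ⟨U, hU, hUeq⟩ := isOpen_induced_iff.mp hopen
  have hwU : w ∈ U := by
    have hm : (⟨w, hws⟩ : s) ∈ {v : s | g (h.symm v) = g z0} := by
      show g (h.symm ⟨w, hws⟩) = g z0
      rw [hz0]
    rw [← hUeq] at hm
    exact hm
  obtain ⟨I, u, hu, hsub⟩ := isOpen_pi_iff.mp hU w hwU
  obtain ⟨z, hz⟩ := P (insert g (I.image c))
  have hgz : g z = y g := hz g (Finset.mem_insert_self _ _)
  have hhzU : (h z : J' → ℕ) ∈ U := by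
    refine hsub fun j hj => ?_
    show (h z : J' → ℕ) j ∈ u j
    rw [show (h z : J' → ℕ) j = w j from
      hz (c j) (Finset.mem_insert_of_mem (Finset.mem_image_of_mem c hj))]
    exact (hu j hj).2
  have hmem : (h z : s) ∈ {v : s | g (h.symm v) = g z0} := by
    rw [← hUeq]
    exact hhzU
  have : g (h.symm (h z)) = g z0 := hmem
  rw [h.symm_apply_apply] at this
  rw [← this, hgz]

/-- A closed subspace of an `ℕ`-compact space is `ℕ`-compact. -/
lemma closedSubset (hY : NCompact Y) {C : Set Y} (hC : IsClosed C) : NCompact ↥C := by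
  obtain ⟨J, hJ, s, hs, ⟨h⟩⟩ := hY
  have hce : IsClosedEmbedding fun y => (h y : J → ℕ) :=
    hs.isClosedEmbedding_subtypeVal.comp h.isClosedEmbedding
  refine ⟨J, hJ, (fun y => (h y : J → ℕ)) '' C, hce.isClosedMap C hC, ?_⟩
  have hemb : IsEmbedding ((fun y => (h y : J → ℕ)) ∘ (Subtype.val : C → Y)) :=
    hce.isEmbedding.comp IsEmbedding.subtypeVal
  refine ⟨(IsEmbedding.toHomeomorph hemb).trans (Homeomorph.setCongr ?_)⟩
  rw [range_comp, Subtype.range_val]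

lemma ofHomeomorph {Z : Type v} [TopologicalSpace Z] (e : Y ≃ₜ Z) (hZ : NCompact Z) :
    NCompact Y := by
  obtain ⟨J, hJ, s, hs, ⟨h⟩⟩ := hZ
  exact ⟨J, hJ, s, hs, ⟨e.trans h⟩⟩

/-- The indicator function of a clopen set, as a continuous map to `ℕ`. -/
noncomputable def ind {A : Set Y} (hA : IsClopen A) : C(Y, ℕ) :=
  ⟨fun x => (A.boolIndicator x).toNat, by
    exact Continuous.comp (g := Bool.toNat) continuous_of_discreteTopology
      ((continuous_boolIndicator_iff_isClopen A).mpr hA)⟩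

lemma ind_eq_one_iff {A : Set Y} (hA : IsClopen A) {x : Y} : ind hA x = 1 ↔ x ∈ A := by
  simp only [ind, ContinuousMap.coe_mk, Set.boolIndicator]
  by_cases hx : x ∈ A <;> simp [hx]

/-- The evaluation map is an embedding for zero-dimensional T1 spaces. -/
lemma isEmbedding_ev [T1Space Y] (hzd : IsTopologicalBasis {A : Set Y | IsClopen A}) :
    IsEmbedding (ev Y) := by
  constructor
  · refine ⟨le_antisymm (continuous_iff_le_induced.mp continuous_ev) ?_⟩
    refine le_trans ?_ (le_of_eq hzd.eq_generateFrom.symm)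
    rw [le_generateFrom_iff_subset_isOpen]
    intro A hA
    have hA' : IsClopen A := hA
    refine isOpen_induced_iff.mpr
      ⟨(fun z : C(Y, ℕ) → ℕ => z (ind hA')) ⁻¹' {1},
        (isOpen_discrete _).preimage (continuous_apply _), ?_⟩
    ext x
    simp only [mem_preimage, mem_singleton_iff]
    exact ind_eq_one_iff hA'
  · intro x x' hxx'
    by_contra hne
    obtain ⟨A, hA, hxA, hsub⟩ := hzd.exists_subset_of_mem_open
      (show x ∈ ({x'}ᶜ : Set Y) from hne) isClosed_singleton.isOpen_compl
    have h1 : ind hA x = 1 := (ind_eq_one_iff hA).mpr hxA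
    have h0 : ¬ ind hA x' = 1 := fun h =>
      hsub ((ind_eq_one_iff hA).mp h) rfl
    rw [show ind hA x = ev Y x (ind hA) from rfl, hxx'] at h1
    exact h0 h1

/-- Extension of a continuous `ℕ`-valued map on a clopen set by zero. -/
noncomputable def extendFn {A : Set Y} (hA : IsClopen A) (g : C(↥A, ℕ)) : C(Y, ℕ) :=
  ⟨fun x => if hx : x ∈ A then g ⟨x, hx⟩ else 0, by
    rw [continuous_discrete_rng]
    intro n
    by_cases hn : n = 0
    · subst hn
      have : (fun x => if hx : x ∈ A then g ⟨x, hx⟩ else 0) ⁻¹' {0} =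
          (Subtype.val '' (⇑g ⁻¹' {0})) ∪ Aᶜ := by
        ext x
        by_cases hx : x ∈ A <;>
          simp [hx, Subtype.exists]
      rw [this]
      exact (hA.isOpen.isOpenMap_subtype_val _ ((isOpen_discrete _).preimage g.continuous)).union
        hA.compl.isOpen
    · have : (fun x => if hx : x ∈ A then g ⟨x, hx⟩ else 0) ⁻¹' {n} =
          Subtype.val '' (⇑g ⁻¹' {n}) := by
        ext x
        by_cases hx : x ∈ A <;>
          simp [hx, Subtype.exists, Ne.symm hn]
      rw [this]
      exact hA.isOpen.isOpenMap_subtype_val _ ((isOpen_discrete _).preimage g.continuous)⟩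

lemma extendFn_of_mem {A : Set Y} (hA : IsClopen A) (g : C(↥A, ℕ)) {x : Y} (hx : x ∈ A) :
    extendFn hA g x = g ⟨x, hx⟩ := dif_pos hx

end NCompactAux

open NCompactAux

theorem nCompact_of_union_compact {X : Type u} [TopologicalSpace X] [T1Space X]
    (hzd : IsTopologicalBasis {A : Set X | IsClopen A})
    (S K : Set X) (hK : IsCompact K) (hSK : S ∪ K = Set.univ)
    (hS : NCompact ↥S) : NCompact X := by
  classical
  have hclosed : IsClosed (range (ev X)) := by
    apply isClosed_of_closure_subset
    intro y hy
    have P := mem_closure_range_ev_iff.mp hy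
    by_cases hall : ∃ x : X, ∀ f : C(X, ℕ), f x = y f
    · obtain ⟨x, hx⟩ := hall
      exact ⟨x, funext hx⟩
    · have hinter : K ∩ ⋂ f : C(X, ℕ), f ⁻¹' {y f} = ∅ := by
        rw [eq_empty_iff_forall_notMem]
        rintro x ⟨-, hx2⟩
        exact hall ⟨x, fun f => by simpa using mem_iInter.mp hx2 f⟩
      obtain ⟨T, hT⟩ := hK.elim_finite_subfamily_closed _
        (fun f : C(X, ℕ) => (isClosed_discrete _).preimage f.continuous) hinter
      have hA : IsClopen (⋂ f ∈ T, f ⁻¹' {y f}) :=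
        T.finite_toSet.isClopen_biInter fun f _ => (isClopen_discrete _).preimage f.continuous
      set A : Set X := ⋂ f ∈ T, f ⁻¹' {y f} with hAdef
      have hxA_of : ∀ {x : X}, (∀ f ∈ T, f x = y f) → x ∈ A := fun {x} h =>
        mem_iInter₂.mpr fun f hf => by simpa using h f hf
      have hAS : A ⊆ S := by
        intro x hxA
        have hx : x ∈ S ∪ K := by rw [hSK]; exact mem_univ x
        rcases hx with h | h
        · exact h
        · exfalso
          rw [eq_empty_iff_forall_notMem] at hT
          exact hT x ⟨h, hxA⟩
      -- ↥A is ℕ-compact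
      have hNCA : NCompact ↥A := by
        have hA' : IsClosed ((Subtype.val : S → X) ⁻¹' A) :=
          hA.isClosed.preimage continuous_subtype_val
        have hNC' := closedSubset hS hA'
        have hemb : IsEmbedding ((Subtype.val : S → X) ∘
            (Subtype.val : ((Subtype.val : S → X) ⁻¹' A) → S)) :=
          IsEmbedding.subtypeVal.comp IsEmbedding.subtypeVal
        have hrange : range ((Subtype.val : S → X) ∘
            (Subtype.val : ((Subtype.val : S → X) ⁻¹' A) → S)) = A := by
          rw [range_comp, Subtype.range_val, Subtype.image_preimage_coe,
            inter_eq_self_of_subset_right hAS]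
        exact ofHomeomorph
          ((Homeomorph.setCongr hrange).symm.trans (IsEmbedding.toHomeomorph hemb).symm) hNC'
      -- the trace point
      set y' : C(↥A, ℕ) → ℕ := fun g => y (extendFn hA g) with hy'def
      have hy'cl : y' ∈ closure (range (ev ↥A)) := by
        rw [mem_closure_range_ev_iff]
        intro T'
        obtain ⟨x, hx⟩ := P (T ∪ T'.image (extendFn hA))
        have hxA : x ∈ A := hxA_of fun f hf => hx f (Finset.mem_union_left _ hf)
        refine ⟨⟨x, hxA⟩, fun g hg => ?_⟩
        have h1 := hx (extendFn hA g)
          (Finset.mem_union_right _ (Finset.mem_image_of_mem _ hg))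
        rw [extendFn_of_mem hA g hxA] at h1
        exact h1
      obtain ⟨a, ha⟩ := (isClosed_range_ev hNCA).closure_subset hy'cl
      refine ⟨(a : X), funext fun f => ?_⟩
      have hres : (f.comp ⟨Subtype.val, continuous_subtype_val⟩ : C(↥A, ℕ)) a =
          y' (f.comp ⟨Subtype.val, continuous_subtype_val⟩) := congrFun ha _
      have h2 : y (extendFn hA (f.comp ⟨Subtype.val, continuous_subtype_val⟩)) = y f := by
        obtain ⟨x, hx⟩ := P (insert f
          (insert (extendFn hA (f.comp ⟨Subtype.val, continuous_subtype_val⟩)) T))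
        have hxA : x ∈ A := hxA_of fun f' hf' =>
          hx f' (Finset.mem_insert_of_mem (Finset.mem_insert_of_mem hf'))
        have e1 : f x = y f := hx f (Finset.mem_insert_self _ _)
        have e2 : extendFn hA (f.comp ⟨Subtype.val, continuous_subtype_val⟩) x =
            y (extendFn hA (f.comp ⟨Subtype.val, continuous_subtype_val⟩)) :=
          hx _ (Finset.mem_insert_of_mem (Finset.mem_insert_self _ _))
        rw [← e2, ← e1, extendFn_of_mem hA _ hxA]
        rfl
      show f ↑a = y f
      calc f ↑a = (f.comp ⟨Subtype.val, continuous_subtype_val⟩ : C(↥A, ℕ)) a := rfl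
        _ = y' (f.comp ⟨Subtype.val, continuous_subtype_val⟩) := hres
        _ = y f := h2
  exact ⟨C(X, ℕ), ⟨⟨fun _ => 0, continuous_const⟩⟩, range (ev X), hclosed,
    ⟨IsEmbedding.toHomeomorph (isEmbedding_ev hzd)⟩⟩
end

section
/- Let X be a realcompact T₁-space such that for every x ∈ X the singleton {x} is a zero-set of X. Then X is hereditarily realcompact. -/
open Set Topology TopologicalSpace

theorem hereditarily_realcompact_of_singleton_zeroSet {X : Type u} [TopologicalSpace X]
    [T1Space X] (hrc : Realcompact X)
    (hz : ∀ x : X, ∃ f : X → ℝ, Continuous f ∧ ({x} : Set X) = f ⁻¹' {0}) :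
    ∀ S : Set X, Realcompact ↥S := by
  obtain ⟨J, hJ, C, hC, ⟨e⟩⟩ := hrc
  choose f hfc hf0 using hz
  intro S
  -- f x y = 0 ↔ y = x
  have hfz : ∀ x y : X, f x y = 0 ↔ y = x := by
    intro x y
    constructor
    · intro h
      have : y ∈ f x ⁻¹' {0} := h
      rw [← hf0] at this; exact this
    · rintro rfl
      have h : y ∈ f y ⁻¹' {0} := by rw [← hf0 y]; exact rfl
      exact h
  have hfne : ∀ (x : ↥Sᶜ) (s : ↥S), f x.1 s.1 ≠ 0 := by
    intro x s h
    rw [hfz] at h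
    exact x.2 (h ▸ s.2)
  -- the embedding map
  set Φ : ↥S → (J ⊕ ↥Sᶜ → ℝ) :=
    fun s => Sum.elim (fun j => (e s.1 : J → ℝ) j) (fun x => (f x.1 s.1)⁻¹) with hΦ
  have hΦcont : Continuous Φ := by
    apply continuous_pi
    rintro (j | x)
    · exact (continuous_apply j).comp (continuous_subtype_val.comp
        (e.continuous.comp continuous_subtype_val))
    · exact ((hfc x.1).comp continuous_subtype_val).inv₀ (fun s => hfne x s)
  -- the closed set C₁
  set C₁ : Set (J ⊕ ↥Sᶜ → ℝ) := {p | (fun j => p (Sum.inl j)) ∈ C} with hC₁def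
  have hC₁ : IsClosed C₁ :=
    hC.preimage (continuous_pi fun j => continuous_apply (Sum.inl j))
  -- projection back to X
  set π : ↥C₁ → X := fun q => e.symm ⟨fun j => q.1 (Sum.inl j), q.2⟩ with hπdef
  have hπcont : Continuous π := by
    apply e.symm.continuous.comp
    apply Continuous.subtype_mk
    apply continuous_pi
    intro j
    exact (continuous_apply (Sum.inl j)).comp (continuous_subtype_val : Continuous
      (Subtype.val : ↥C₁ → (J ⊕ ↥Sᶜ → ℝ)))
  -- the closed condition set
  set A : Set ↥C₁ := ⋂ x : ↥Sᶜ, {q | q.1 (Sum.inr x) * f x.1 (π q) = 1} with hAdef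
  have hA : IsClosed A := by
    apply isClosed_iInter
    intro x
    have : Continuous fun q : ↥C₁ => q.1 (Sum.inr x) * f x.1 (π q) :=
      ((continuous_apply (Sum.inr x)).comp continuous_subtype_val).mul ((hfc x.1).comp hπcont)
    exact isClosed_singleton.preimage this
  set T : Set (J ⊕ ↥Sᶜ → ℝ) := Subtype.val '' A with hTdef
  have hT : IsClosed T := hC₁.isClosedEmbedding_subtypeVal.isClosedMap _ hA
  refine ⟨J ⊕ ↥Sᶜ, ⟨Sum.inl hJ.some⟩, T, hT, ⟨?_⟩⟩
  -- Φ lands in C₁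
  have hΦC₁ : ∀ s : ↥S, Φ s ∈ C₁ := by
    intro s
    show (fun j => Φ s (Sum.inl j)) ∈ C
    have : (fun j => Φ s (Sum.inl j)) = (e s.1 : J → ℝ) := rfl
    rw [this]; exact (e s.1).2
  have hπΦ : ∀ s : ↥S, π ⟨Φ s, hΦC₁ s⟩ = s.1 := by
    intro s
    show e.symm ⟨fun j => Φ s (Sum.inl j), _⟩ = s.1
    have h1 : (⟨fun j => Φ s (Sum.inl j), hΦC₁ s⟩ : ↥C) = e s.1 := Subtype.ext rfl
    rw [h1, e.symm_apply_apply]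
  have hΦA : ∀ s : ↥S, (⟨Φ s, hΦC₁ s⟩ : ↥C₁) ∈ A := by
    intro s
    rw [hAdef]
    refine mem_iInter.2 fun x => ?_
    show Φ s (Sum.inr x) * f x.1 (π ⟨Φ s, hΦC₁ s⟩) = 1
    rw [hπΦ]
    exact inv_mul_cancel₀ (hfne x s)
  -- membership extraction for elements of T
  have hTC₁ : ∀ q : ↥T, q.1 ∈ C₁ := by
    rintro ⟨_, ⟨a, _, rfl⟩⟩
    exact a.2
  have hTA : ∀ q : ↥T, (⟨q.1, hTC₁ q⟩ : ↥C₁) ∈ A := by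
    rintro ⟨_, ⟨a, ha, rfl⟩⟩
    have : (⟨a.1, hTC₁ ⟨a.1, ⟨a, ha, rfl⟩⟩⟩ : ↥C₁) = a := Subtype.ext rfl
    rw [this]; exact ha
  have hcond : ∀ (q : ↥T) (x : ↥Sᶜ),
      q.1 (Sum.inr x) * f x.1 (π ⟨q.1, hTC₁ q⟩) = 1 := by
    intro q x
    have := hTA q
    rw [hAdef, mem_iInter] at this
    exact this x
  have hTS : ∀ q : ↥T, π ⟨q.1, hTC₁ q⟩ ∈ S := by
    intro q
    by_contra h
    have hc := hcond q ⟨_, h⟩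
    rw [(hfz _ _).2 rfl, mul_zero] at hc
    exact zero_ne_one hc
  -- build the homeomorphism
  refine Homeomorph.mk (Equiv.mk
      (fun s => (⟨Φ s, ⟨⟨Φ s, hΦC₁ s⟩, hΦA s, rfl⟩⟩ : ↥T))
      (fun q => (⟨π ⟨q.1, hTC₁ q⟩, hTS q⟩ : ↥S)) ?_ ?_) ?_ ?_
  · intro s
    exact Subtype.ext (hπΦ s)
  · intro q
    apply Subtype.ext
    show Φ ⟨π ⟨q.1, hTC₁ q⟩, hTS q⟩ = q.1
    funext i
    set y : X := π ⟨q.1, hTC₁ q⟩ with hy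
    rcases i with j | x
    · show (e y : J → ℝ) j = q.1 (Sum.inl j)
      have : e y = ⟨fun j => q.1 (Sum.inl j), hTC₁ q⟩ := by
        rw [hy, hπdef]; exact e.apply_symm_apply _
      rw [this]
    · show (f x.1 y)⁻¹ = q.1 (Sum.inr x)
      have hc := hcond q x
      rw [← hy] at hc
      exact (eq_inv_of_mul_eq_one_left hc).symm
  · exact Continuous.subtype_mk hΦcont _
  · exact Continuous.subtype_mk
      (hπcont.comp (Continuous.subtype_mk continuous_subtype_val _)) _
end

section
/- Let X be an ℕ-compact space such that for every x ∈ X the singleton {x} is a countable intersection of clopen sets. Then every subspace of X is ℕ-compact. -/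
open Set Topology TopologicalSpace

theorem hereditarily_nCompact_of_singleton_cdelta {X : Type u} [TopologicalSpace X]
    (hnc : NCompact X)
    (hz : ∀ x : X, ∃ F : Set (Set X), F.Countable ∧ F.Nonempty ∧ (∀ A ∈ F, IsClopen A) ∧
      ({x} : Set X) = ⋂₀ F) :
    ∀ S : Set X, NCompact ↥S := by
  classical
  obtain ⟨J, ⟨j0⟩, s, hs, ⟨h⟩⟩ := hnc
  -- the closed embedding of `X` into `ℕ^J`
  set e : X → J → ℕ := Subtype.val ∘ h with he_def
  have he : IsClosedEmbedding e := hs.isClosedEmbedding_subtypeVal.comp h.isClosedEmbedding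
  -- extract, for each `x`, a sequence of clopen sets intersecting to `{x}`
  have hA : ∀ x : X, ∃ A : ℕ → Set X, (∀ n, IsClopen (A n)) ∧ ({x} : Set X) = ⋂ n, A n := by
    intro x
    obtain ⟨F, hFc, hFne, hFcl, hFx⟩ := hz x
    obtain ⟨f, rfl⟩ := hFc.exists_eq_range hFne
    exact ⟨f, fun n => hFcl _ ⟨n, rfl⟩, by rw [hFx, sInter_range]⟩
  choose A hAclopen hAeq using hA
  intro S
  -- the "rank" clopen pieces
  set B : ↥(Sᶜ : Set X) → ℕ → Set X :=
    fun t n => (A ↑t n)ᶜ ∩ ⋂ k ∈ Finset.range n, A ↑t k with hB_def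
  have hBclopen : ∀ t n, IsClopen (B t n) := fun t n =>
    ((hAclopen _ n).compl).inter (isClopen_biInter_finset fun k _ => hAclopen _ k)
  have hBmem : ∀ t n x, x ∈ B t n ↔ (x ∉ A ↑t n ∧ ∀ k < n, x ∈ A ↑t k) := by
    intro t n x
    simp [hB_def, Finset.mem_range]
  -- every point distinct from `t` lies in exactly one `B t n`
  have hmem : ∀ (t : ↥(Sᶜ : Set X)) (x : X), x ≠ ↑t → ∃ n, x ∈ B t n := by
    intro t x hx
    have hne : {n | x ∉ A ↑t n}.Nonempty := by
      by_contra hcon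
      rw [Set.not_nonempty_iff_eq_empty] at hcon
      have : x ∈ ⋂ n, A (↑t : X) n := by
        refine mem_iInter.2 fun n => ?_
        by_contra hn
        have hmem' : n ∈ {n | x ∉ A (↑t : X) n} := hn
        rw [hcon] at hmem'
        exact hmem'
      rw [← hAeq (↑t : X)] at this
      exact hx this
    refine ⟨sInf {n | x ∉ A ↑t n}, (hBmem t _ x).2 ⟨Nat.sInf_mem hne, fun k hk => ?_⟩⟩
    have := Nat.notMem_of_lt_sInf hk
    simpa using this
  have huniq : ∀ (t : ↥(Sᶜ : Set X)) (x : X) (n m : ℕ), x ∈ B t n → x ∈ B t m → n = m := by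
    intro t x n m hn hm
    rcases lt_trichotomy n m with hlt | heq | hlt
    · exact absurd (((hBmem t m x).1 hm).2 n hlt) ((hBmem t n x).1 hn).1
    · exact heq
    · exact absurd (((hBmem t n x).1 hn).2 m hlt) ((hBmem t m x).1 hm).1
  -- the rank functions on `S`
  have hrex : ∀ (t : ↥(Sᶜ : Set X)) (a : ↥S), ∃ n, (↑a : X) ∈ B t n := by
    intro t a
    refine hmem t ↑a fun hcon => ?_
    have : (↑a : X) ∈ Sᶜ := hcon ▸ t.2
    exact this a.2
  choose r hr using hrex
  -- the big embedding
  set Φ : ↥S → (J ⊕ ↥(Sᶜ : Set X)) → ℕ :=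
    fun a => Sum.elim (e ↑a) (fun t => r t a) with hΦ_def
  have hΦcont : Continuous Φ := by
    refine continuous_pi ?_
    rintro (j | t)
    · exact (continuous_apply j).comp (he.continuous.comp continuous_subtype_val)
    · show Continuous fun a : ↥S => r t a
      refine continuous_discrete_rng.2 fun n => ?_
      have : (fun a : ↥S => r t a) ⁻¹' {n} = Subtype.val ⁻¹' (B t n) := by
        ext a
        constructor
        · intro ha
          have : r t a = n := ha
          exact this ▸ hr t a
        · intro ha
          exact huniq t ↑a (r t a) n (hr t a) ha
      rw [this]
      exact ((hBclopen t n).preimage continuous_subtype_val).isOpen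
  -- the projection to the `J` coordinates
  set π : ((J ⊕ ↥(Sᶜ : Set X)) → ℕ) → (J → ℕ) := fun z => z ∘ Sum.inl with hπ_def
  have hπcont : Continuous π := continuous_pi fun j => continuous_apply (Sum.inl j)
  have hπΦ : π ∘ Φ = e ∘ (Subtype.val : ↥S → X) := by
    funext a
    rfl
  have hemb : IsEmbedding Φ := by
    refine IsEmbedding.of_comp hΦcont hπcont ?_
    rw [hπΦ]
    exact he.isEmbedding.comp IsEmbedding.subtypeVal
  -- key step: closedness of the range of `Φ`
  have hkey : ∀ y ∈ closure (range Φ), ∀ t : ↥(Sᶜ : Set X), (y ∘ Sum.inl) ∈ e '' B t (y (Sum.inr t)) := by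
    intro y hy t
    set n := y (Sum.inr t) with hn_def
    set U : Set ((J ⊕ ↥(Sᶜ : Set X)) → ℕ) := (fun z => z (Sum.inr t)) ⁻¹' {n} with hU_def
    have hUopen : IsOpen U := (isOpen_discrete _).preimage (continuous_apply (Sum.inr t))
    have hyU : y ∈ U := rfl
    have hy2 : y ∈ closure (U ∩ range Φ) := hUopen.inter_closure ⟨hyU, hy⟩
    have hsub : π '' (U ∩ range Φ) ⊆ e '' B t n := by
      rintro - ⟨z, ⟨hzU, a, rfl⟩, rfl⟩
      have hra : r t a = n := hzU
      exact ⟨↑a, hra ▸ hr t a, rfl⟩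
    have hclosed : IsClosed (e '' B t n) := he.isClosedMap _ (hBclopen t n).isClosed
    have : π y ∈ closure (e '' B t n) :=
      closure_mono hsub (image_closure_subset_closure_image hπcont ⟨y, hy2, rfl⟩)
    rwa [hclosed.closure_eq] at this
  have hran : IsClosed (range Φ) := by
    refine isClosed_of_closure_subset fun y hy => ?_
    -- first get the point `x ∈ X` hit by the `J` coordinates of `y`
    have hJ : π y ∈ e '' closure S := by
      have h1 : π y ∈ closure (π '' range Φ) :=
        image_closure_subset_closure_image hπcont ⟨y, hy, rfl⟩
      have h2 : π '' range Φ ⊆ e '' S := by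
        rintro - ⟨-, ⟨a, rfl⟩, rfl⟩
        exact ⟨↑a, a.2, rfl⟩
      have h3 : closure (e '' S) ⊆ e '' closure S :=
        he.isClosedMap.closure_image_subset S
      exact h3 (closure_mono h2 h1)
    obtain ⟨x, -, hxe⟩ := hJ
    have hxB : ∀ t : ↥(Sᶜ : Set X), x ∈ B t (y (Sum.inr t)) := by
      intro t
      obtain ⟨x', hx', hex'⟩ := hkey y hy t
      rwa [he.injective (hxe.trans hex'.symm)]
    have hxS : x ∈ S := by
      by_contra hxS
      set t : ↥(Sᶜ : Set X) := ⟨x, hxS⟩ with ht_def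
      have := ((hBmem t (y (Sum.inr t)) x).1 (hxB t)).1
      have hxt : x ∈ ⋂ k, A x k := by
        rw [← hAeq x]; exact rfl
      exact this (mem_iInter.1 hxt _)
    refine ⟨⟨x, hxS⟩, ?_⟩
    funext z
    rcases z with j | t
    · exact congrFun hxe j
    · exact huniq t x _ _ (hr t ⟨x, hxS⟩) (hxB t)
  refine ⟨J ⊕ ↥(Sᶜ : Set X), ⟨Sum.inl j0⟩, range Φ, hran,
    ⟨hemb.toHomeomorph⟩⟩
end
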